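/- arXiv:1706.03869 — 6 statements merged into one kernel-verified Lean document; each statement's English description precedes it below -/
import Mathlib

section
/- Let k ≥ 1 be an integer, let β₀, β₁, …, β_k be real numbers with sin βⱼ ≠ 0 for all j, and let ℓ₁, …, ℓ_k be positive reals. Let M be the k×k symmetric tridiagonal real matrix with diagonal entries M_{jj} = (cot β_{j−1} + cot βⱼ)/ℓⱼ² for j = 1,…,k and off-diagonal entries M_{j,j+1} = M_{j+1,j} = −csc βⱼ/(ℓⱼ ℓ_{j+1}) for j = 1,…,k−1 (all other entries zero). Then det M = (∏_{j=0}^{k} csc βⱼ) · sin(β₀ + β₁ + ⋯ + β_k) / (∏_{j=1}^{k} ℓⱼ²). -/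
/-!
Write `D = diag (ℓ₁⁻¹, …, ℓ_k⁻¹)`. Then `M = D T D`, where `T` is the symmetric tridiagonal
matrix with diagonal entries `cot β_{j-1} + cot β_j` and off-diagonal entries `-csc β_j`, so
`det M = det T / ∏ ℓ_j²`. Expanding along the last row, the leading principal minors of a
symmetric tridiagonal matrix satisfy the continuant recursion `p_{n+2} = d_{n+1} p_{n+1} - e_n² p_n`,
and `sin (β₀ + ⋯ + β_n) / ∏_{j ≤ n} sin β_j` satisfies the same recursion by the identity
`sin (x + y) sin (y + z) = sin x sin z + sin y sin (x + y + z)`.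
-/

namespace Matrix

variable {R : Type*} [CommRing R]

def symmTridiagonal (d e : ℕ → R) (n : ℕ) : Matrix (Fin n) (Fin n) R := fun i j =>
  if (i : ℕ) = j then d i
  else if (j : ℕ) = i + 1 then e i
  else if (i : ℕ) = j + 1 then e j
  else 0

variable (d e : ℕ → R)

theorem symmTridiagonal_apply_self {n : ℕ} (i : Fin n) : symmTridiagonal d e n i i = d i := by
  simp [symmTridiagonal]

theorem symmTridiagonal_apply_of_succ_eq {n : ℕ} {i j : Fin n} (h : (i : ℕ) + 1 = j) :
    symmTridiagonal d e n i j = e i := by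
  simp only [symmTridiagonal]
  split_ifs <;> first | rfl | omega

theorem symmTridiagonal_apply_of_eq_succ {n : ℕ} {i j : Fin n} (h : (i : ℕ) = j + 1) :
    symmTridiagonal d e n i j = e j := by
  simp only [symmTridiagonal]
  split_ifs <;> first | rfl | omega

theorem symmTridiagonal_apply_of_succ_lt {n : ℕ} {i j : Fin n}
    (h : (i : ℕ) + 1 < j ∨ (j : ℕ) + 1 < i) : symmTridiagonal d e n i j = 0 := by
  simp only [symmTridiagonal]
  split_ifs <;> first | rfl | omega

theorem isSymm_symmTridiagonal (n : ℕ) : (symmTridiagonal d e n).IsSymm := by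
  refine IsSymm.ext fun i j => ?_
  simp only [symmTridiagonal]
  split_ifs <;> first | rfl | omega | congr 1

theorem symmTridiagonal_submatrix_castSucc (n : ℕ) :
    (symmTridiagonal d e (n + 1)).submatrix Fin.castSucc Fin.castSucc = symmTridiagonal d e n := by
  ext i j
  simp [symmTridiagonal]

theorem det_symmTridiagonal_succ_succ (n : ℕ) :
    (symmTridiagonal d e (n + 2)).det =
      d (n + 1) * (symmTridiagonal d e (n + 1)).det - e n ^ 2 * (symmTridiagonal d e n).det := by
  have hminor : ((symmTridiagonal d e (n + 2)).submatrix Fin.castSucc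
      (Fin.last n).castSucc.succAbove).det = e n * (symmTridiagonal d e n).det := by
    rw [det_succ_column _ (Fin.last n), Fin.sum_univ_castSucc, Finset.sum_eq_zero, zero_add]
    · have : ((symmTridiagonal d e (n + 2)).submatrix Fin.castSucc
          (Fin.last n).castSucc.succAbove).submatrix (Fin.last n).succAbove
          (Fin.last n).succAbove = symmTridiagonal d e n := by
        ext i j
        simp [symmTridiagonal, Fin.succAbove_of_castSucc_lt, Fin.castSucc_lt_last]
      rw [this, submatrix_apply, symmTridiagonal_apply_of_succ_eq _ _ (by simp)]
      simp
    · intro i _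
      rw [submatrix_apply, symmTridiagonal_apply_of_succ_lt _ _ (by simp), mul_zero, zero_mul]
  rw [det_succ_row _ (Fin.last _), Fin.sum_univ_castSucc, Fin.sum_univ_castSucc,
    Finset.sum_eq_zero, zero_add, Fin.succAbove_last, hminor, symmTridiagonal_apply_self,
    symmTridiagonal_apply_of_eq_succ _ _ (by simp)]
  · simp only [Fin.val_last, Fin.val_castSucc, odd_add_one_self, Odd.neg_one_pow, Even.add_self,
      Even.neg_pow, one_pow, neg_mul, one_mul, symmTridiagonal_submatrix_castSucc]
    ring
  · intro j _
    rw [symmTridiagonal_apply_of_succ_lt _ _ (by simp), mul_zero, zero_mul]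

theorem eq_symmTridiagonal {n : ℕ} {M : Matrix (Fin n) (Fin n) R} (hdiag : ∀ i, M i i = d i)
    (hsucc : ∀ i j : Fin n, (j : ℕ) = i + 1 → M i j = e i) (hM : M.IsSymm)
    (hzero : ∀ i j : Fin n, (i : ℕ) + 1 < j → M i j = 0) : M = symmTridiagonal d e n := by
  have upper : ∀ i j : Fin n, (i : ℕ) < j → M i j = symmTridiagonal d e n i j := by
    intro i j hij
    rcases (Nat.succ_le_of_lt hij).eq_or_lt with hij | hij
    · rw [hsucc i j hij.symm, symmTridiagonal_apply_of_succ_eq _ _ hij]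
    · rw [hzero i j hij, symmTridiagonal_apply_of_succ_lt _ _ (.inl hij)]
  ext i j
  rcases lt_trichotomy (i : ℕ) j with hij | hij | hij
  · exact upper i j hij
  · rw [Fin.ext hij, hdiag, symmTridiagonal_apply_self]
  · rw [← hM.apply, upper j i hij, ← (isSymm_symmTridiagonal d e n).apply]

theorem diagonal_mul_symmTridiagonal_mul_diagonal (c : ℕ → R) (n : ℕ) :
    diagonal (fun i : Fin n => c i) * symmTridiagonal d e n * diagonal (fun i : Fin n => c i) =
      symmTridiagonal (fun i => c i * d i * c i) (fun i => c i * e i * c (i + 1)) n := by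
  ext i j
  simp only [mul_diagonal, diagonal_mul, symmTridiagonal]
  split_ifs <;> simp_all only [mul_zero, zero_mul]
  ring

end Matrix

open Finset Matrix Real

theorem Real.sin_add_mul_sin_add (x y z : ℝ) :
    sin (x + y) * sin (y + z) = sin x * sin z + sin y * sin (x + y + z) := by
  simp only [sin_add, cos_add]
  linear_combination (sin x * sin z) * sin_sq_add_cos_sq y

theorem det_symmTridiagonal_cot_csc (β : ℕ → ℝ) (n : ℕ) (hβ : ∀ j ≤ n, sin (β j) ≠ 0) :
    (symmTridiagonal (fun i => cos (β i) / sin (β i) + cos (β (i + 1)) / sin (β (i + 1)))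
      (fun i => -(1 / sin (β (i + 1)))) n).det =
    (∏ j ∈ range (n + 1), 1 / sin (β j)) * sin (∑ j ∈ range (n + 1), β j) := by
  induction n using Nat.twoStepInduction with
  | zero =>
    have := hβ 0 le_rfl
    simp [this]
  | one =>
    rw [det_fin_one, symmTridiagonal_apply_self]
    have h₀ := hβ 0 zero_le_one
    have h₁ := hβ 1 le_rfl
    simp only [Fin.val_eq_zero, zero_add, Nat.reduceAdd, prod_range_succ, range_one,
      prod_singleton, sum_range_succ, sum_singleton, sin_add]
    field_simp
    ring
  | more n ih₀ ih₁ =>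
    rw [det_symmTridiagonal_succ_succ, ih₀ fun j hj => hβ j (by omega),
      ih₁ fun j hj => hβ j (by omega), prod_range_succ _ (n + 2), prod_range_succ _ (n + 1),
      sum_range_succ _ (n + 2), sum_range_succ _ (n + 1)]
    have h₁ := hβ (n + 1) (by omega)
    have h₂ := hβ (n + 2) (by omega)
    simp only [show n + 1 + 1 = n + 2 from rfl]
    field_simp
    set S := ∑ j ∈ range (n + 1), β j
    linear_combination (∏ j ∈ range (n + 1), 1 / sin (β j)) *
      (sin_add_mul_sin_add S (β (n + 1)) (β (n + 2)) -
        sin (S + β (n + 1)) * sin_add (β (n + 1)) (β (n + 2)))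

open Finset in
theorem det_tridiagonal_wheel_general (k : ℕ) (β ℓ : ℕ → ℝ)
    (hβ : ∀ j ≤ k, Real.sin (β j) ≠ 0)
    (M : Matrix (Fin k) (Fin k) ℝ)
    (hdiag : ∀ i : Fin k,
      M i i = (Real.cos (β i) / Real.sin (β i)
        + Real.cos (β ((i : ℕ) + 1)) / Real.sin (β ((i : ℕ) + 1))) / (ℓ ((i : ℕ) + 1)) ^ 2)
    (hoff : ∀ i j : Fin k, (j : ℕ) = (i : ℕ) + 1 →
      M i j = -(1 / Real.sin (β ((i : ℕ) + 1))) / (ℓ ((i : ℕ) + 1) * ℓ ((i : ℕ) + 2)))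
    (hsymm : ∀ i j : Fin k, M i j = M j i)
    (hzero : ∀ i j : Fin k, (i : ℕ) + 1 < (j : ℕ) → M i j = 0) :
    M.det = ((∏ j ∈ range (k + 1), (1 / Real.sin (β j)))
        * Real.sin (∑ j ∈ range (k + 1), β j)) / ∏ j ∈ range k, (ℓ (j + 1)) ^ 2 := by
  set c : ℕ → ℝ := fun i => (ℓ (i + 1))⁻¹
  have hM : M = diagonal (fun i : Fin k => c i) *
      symmTridiagonal (fun i => cos (β i) / sin (β i) + cos (β (i + 1)) / sin (β (i + 1)))
        (fun i => -(1 / sin (β (i + 1)))) k * diagonal (fun i : Fin k => c i) := by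
    rw [diagonal_mul_symmTridiagonal_mul_diagonal]
    refine eq_symmTridiagonal _ _ (fun i => ?_) (fun i j hij => ?_)
      (IsSymm.ext fun i j => hsymm j i) hzero
    · rw [hdiag]
      ring
    · rw [hoff i j hij]
      ring
  rw [hM, det_mul, det_mul, det_diagonal, det_symmTridiagonal_cot_csc β k hβ,
    Fin.prod_univ_eq_prod_range c]
  simp only [c, prod_inv_distrib, prod_pow]
  ring

open Finset in
/-- Determinant of the reduced tridiagonal quadratic-form matrix of a flat origami vertex
(Eq. (determinant) of the paper).  Here the `k × k` matrix `M` is indexed by `i : Fin k`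
representing the paper index `j = i + 1 ∈ {1, …, k}`; its diagonal entries are
`(cot β_{j-1} + cot β_j) / ℓ_j ^ 2`, its entries adjacent to the diagonal are
`- csc β_j / (ℓ_j * ℓ_{j+1})`, it is symmetric, and all other entries vanish.  Then
`det M = (∏_{j=0}^{k} csc β_j) * sin (β₀ + ⋯ + β_k) / ∏_{j=1}^{k} ℓ_j ^ 2`,
where `csc x = 1 / sin x` and `cot x = cos x / sin x`. -/
theorem det_tridiagonal_wheel (k : ℕ) (hk : 1 ≤ k) (β ℓ : ℕ → ℝ)
    (hβ : ∀ j ≤ k, Real.sin (β j) ≠ 0)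
    (hℓ : ∀ j, 1 ≤ j → j ≤ k → 0 < ℓ j)
    (M : Matrix (Fin k) (Fin k) ℝ)
    (hdiag : ∀ i : Fin k,
      M i i = (Real.cos (β i) / Real.sin (β i)
        + Real.cos (β ((i : ℕ) + 1)) / Real.sin (β ((i : ℕ) + 1))) / (ℓ ((i : ℕ) + 1)) ^ 2)
    (hoff : ∀ i j : Fin k, (j : ℕ) = (i : ℕ) + 1 →
      M i j = -(1 / Real.sin (β ((i : ℕ) + 1))) / (ℓ ((i : ℕ) + 1) * ℓ ((i : ℕ) + 2)))
    (hsymm : ∀ i j : Fin k, M i j = M j i)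
    (hzero : ∀ i j : Fin k, (i : ℕ) + 1 < (j : ℕ) → M i j = 0) :
    M.det = ((∏ j ∈ range (k + 1), (1 / Real.sin (β j)))
        * Real.sin (∑ j ∈ range (k + 1), β j)) / ∏ j ∈ range k, (ℓ (j + 1)) ^ 2 :=
  det_tridiagonal_wheel_general k β ℓ hβ M hdiag hoff hsymm hzero
end

section
/- Let N ≥ 4 be an integer and L > 0 a real number. For m = 1, …, N−2 define λ_m = (2 csc(2π/N)/L²) · (cos(2π/N) − cos(mπ/(N−1))). Then λ₁ < 0 and λ_m > 0 for all m with 2 ≤ m ≤ N−2. Moreover, each λ_m is an eigenvalue of the (N−2)×(N−2) symmetric tridiagonal matrix with all diagonal entries equal to 2cot(2π/N)/L² and all entries adjacent to the diagonal equal to −csc(2π/N)/L². -/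
/-! The tridiagonal Toeplitz matrix with diagonal `a` and off-diagonal `b` has the discrete sine
modes `v k = sin ((k + 1) θ)`, `θ = m π / (n + 1)`, as eigenvectors: the identity
`sin (x - θ) + sin (x + θ) = 2 cos θ sin x` gives the eigenvalue `a + 2 b cos θ` in every row,
the first and last rows included because `sin 0 = sin ((n + 1) θ) = 0`. For `n = N - 2` this
eigenvalue is `λ_m`. Its sign is that of `cos (2π/N) - cos (m π/(N - 1))`, and `cos` is strictly
decreasing on `[0, π]`, while `π/(N - 1) < 2π/N < m π/(N - 1) ≤ π` for `2 ≤ m ≤ N - 2`. -/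

open Real Finset Matrix

def tridiagonalToeplitz {R : Type*} [Zero R] (n : ℕ) (a b : R) : Matrix (Fin n) (Fin n) R :=
  fun i j => if i = j then a else if (i : ℕ) + 1 = j ∨ (j : ℕ) + 1 = i then b else 0

section Tridiagonal

variable {R : Type*} [Semiring R] {n : ℕ} (a b : R)

lemma tridiagonalToeplitz_apply_eq_add (i k : Fin n) :
    tridiagonalToeplitz n a b i k =
      (if (k : ℕ) = i then a else 0) + (if (k : ℕ) = i + 1 then b else 0) +
        (if (k : ℕ) + 1 = i then b else 0) := by
  unfold tridiagonalToeplitz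
  split_ifs <;> simp_all [Fin.ext_iff]; omega

/-- Extending the vector by zeros, `u 0 = 0 = u (n + 1)`, removes the boundary cases. -/
lemma tridiagonalToeplitz_mulVec_apply {u : ℕ → R} (hu0 : u 0 = 0) (hun : u (n + 1) = 0)
    (i : Fin n) :
    (tridiagonalToeplitz n a b *ᵥ fun k => u (k + 1)) i =
      a * u (i + 1) + b * (u i + u (i + 2)) := by
  simp only [mulVec, dotProduct, tridiagonalToeplitz_apply_eq_add, add_mul,
    sum_add_distrib, ite_mul, zero_mul]
  rw [Fin.sum_univ_eq_sum_range (fun k => if k = (i : ℕ) then a * u (k + 1) else 0),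
    Fin.sum_univ_eq_sum_range (fun k => if k = (i : ℕ) + 1 then b * u (k + 1) else 0),
    Fin.sum_univ_eq_sum_range (fun k => if k + 1 = (i : ℕ) then b * u (k + 1) else 0),
    sum_ite_eq', sum_ite_eq', if_pos (mem_range.2 i.2)]
  have hnext : (if (i : ℕ) + 1 ∈ range n then b * u (i + 1 + 1) else 0) = b * u (i + 2) := by
    split_ifs with h
    · rfl
    · rw [show (i : ℕ) + 2 = n + 1 by simp at h; omega, hun, mul_zero]
  have hprev : (∑ k ∈ range n, if k + 1 = (i : ℕ) then b * u (k + 1) else 0) = b * u i := by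
    obtain ⟨i, hi⟩ := i
    cases i with
    | zero => simp [hu0]
    | succ j =>
      simp only [Nat.add_right_cancel_iff, sum_ite_eq', mem_range, if_pos (by omega : j < n)]
  rw [hnext, hprev, mul_add]; abel

end Tridiagonal

lemma sin_sub_add_sin_add (x θ : ℝ) : sin (x - θ) + sin (x + θ) = 2 * cos θ * sin x := by
  rw [sin_sub, sin_add]; ring

lemma tridiagonalToeplitz_mulVec_sin (n : ℕ) (a b : ℝ) {θ : ℝ} (hθ : sin ((n + 1) * θ) = 0) :
    tridiagonalToeplitz n a b *ᵥ (fun k : Fin n => sin ((k + 1) * θ)) =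
      (a + 2 * b * cos θ) • fun k : Fin n => sin ((k + 1) * θ) := by
  ext i
  have h := tridiagonalToeplitz_mulVec_apply a b (u := fun k : ℕ => sin (k * θ))
    (by simp) (by exact_mod_cast hθ) i
  push_cast at h
  have key := sin_sub_add_sin_add ((i + 1) * θ) θ
  rw [show (i + 1) * θ - θ = i * θ by ring, show (i + 1) * θ + θ = (i + 2) * θ by ring] at key
  rw [h, Pi.smul_apply, smul_eq_mul]
  linear_combination b * key

lemma tridiagonalToeplitz_hasEigenvalue (a b : ℝ) {n m : ℕ} (hm : 1 ≤ m) (hmn : m ≤ n) :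
    Module.End.HasEigenvalue (tridiagonalToeplitz n a b).mulVecLin
      (a + 2 * b * cos (m * π / (n + 1))) := by
  set θ := m * π / (n + 1)
  have hθ : sin ((n + 1) * θ) = 0 := by
    rw [show (n + 1) * θ = m * π by unfold θ; field_simp]
    exact sin_nat_mul_pi m
  have hθ_pos : 0 < sin θ := by
    apply sin_pos_of_pos_of_lt_pi (by unfold θ; positivity)
    rw [div_lt_iff₀ (by positivity)]
    have : (m : ℝ) < n + 1 := by exact_mod_cast Nat.lt_succ_of_le hmn
    nlinarith [pi_pos]
  refine Module.End.hasEigenvalue_of_hasEigenvector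
    ⟨Module.End.mem_eigenspace_iff.2 (tridiagonalToeplitz_mulVec_sin n a b hθ), ?_⟩
  intro h
  exact hθ_pos.ne' (by simpa using congrFun h ⟨0, by omega⟩)

lemma pi_div_sub_one_lt_two_pi_div {x : ℝ} (hx : 2 < x) : π / (x - 1) < 2 * π / x := by
  rw [div_lt_div_iff₀ (by linarith) (by linarith)]
  nlinarith [pi_pos]

lemma two_pi_div_lt_mul_pi_div_sub_one {x m : ℝ} (hx : 1 < x) (hm : 2 ≤ m) :
    2 * π / x < m * π / (x - 1) := by
  rw [div_lt_div_iff₀ (by linarith) (by linarith)]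
  nlinarith [pi_pos, mul_le_mul_of_nonneg_right hm (by linarith : (0 : ℝ) ≤ x)]

lemma mul_pi_div_le_pi {x m : ℝ} (hx : 0 < x) (hm : m ≤ x) : m * π / x ≤ π := by
  rw [div_le_iff₀ hx]
  nlinarith [pi_pos]

/-- The reduced quadratic-form matrix of an unfolded `N`-fold origami vertex with all sector
angles equal to `2π/N` and all fold lengths equal to `L` is the `(N-2) × (N-2)` symmetric
tridiagonal matrix with diagonal entries `2 cot (2π/N) / L²` and entries adjacent to the
diagonal equal to `- csc (2π/N) / L²`.  Its eigenvalues are the numbers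
`λ_m = (2 csc (2π/N) / L²) (cos (2π/N) - cos (m π/(N-1)))`, `m = 1, …, N-2`; moreover
`λ₁ < 0` and `λ_m > 0` for `2 ≤ m ≤ N-2`. -/
theorem equal_angle_vertex_eigenvalues (N : ℕ) (hN : 4 ≤ N) (L : ℝ) (hL : 0 < L)
    (lam : ℕ → ℝ)
    (hlam : ∀ m : ℕ, lam m = (2 * (1 / Real.sin (2 * Real.pi / N)) / L ^ 2)
      * (Real.cos (2 * Real.pi / N) - Real.cos (m * Real.pi / ((N : ℝ) - 1))))
    (M : Matrix (Fin (N - 2)) (Fin (N - 2)) ℝ)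
    (hM : ∀ i j : Fin (N - 2), M i j =
      if i = j then 2 * (Real.cos (2 * Real.pi / N) / Real.sin (2 * Real.pi / N)) / L ^ 2
      else if (i : ℕ) + 1 = (j : ℕ) ∨ (j : ℕ) + 1 = (i : ℕ) then
        -(1 / Real.sin (2 * Real.pi / N)) / L ^ 2
      else 0) :
    lam 1 < 0 ∧ (∀ m : ℕ, 2 ≤ m → m ≤ N - 2 → 0 < lam m) ∧
    ∀ m : ℕ, 1 ≤ m → m ≤ N - 2 → Module.End.HasEigenvalue M.mulVecLin (lam m) := by
  have hN' : (4 : ℝ) ≤ N := by exact_mod_cast hN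
  have hangle : 2 * π / N ≤ π := mul_pi_div_le_pi (by linarith) (by linarith)
  have hsin : 0 < sin (2 * π / N) :=
    sin_pos_of_pos_of_lt_pi (by positivity) (by rw [div_lt_iff₀ (by linarith)]; nlinarith [pi_pos])
  have hK : 0 < 2 * (1 / sin (2 * π / N)) / L ^ 2 := by positivity
  have hcast {m : ℕ} (hm : m ≤ N - 2) : (m : ℝ) ≤ N - 2 := by
    have : (m : ℝ) + 2 ≤ N := by exact_mod_cast (by omega : m + 2 ≤ N)
    linarith
  refine ⟨?_, fun m hm2 hmN => ?_, fun m hm1 hmN => ?_⟩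
  · rw [hlam, Nat.cast_one, one_mul]
    exact mul_neg_of_pos_of_neg hK (sub_neg.2 (cos_lt_cos_of_nonneg_of_le_pi
      (div_nonneg pi_pos.le (by linarith)) hangle
      (pi_div_sub_one_lt_two_pi_div (by linarith))))
  · rw [hlam]
    exact mul_pos hK (sub_pos.2 (cos_lt_cos_of_nonneg_of_le_pi (by positivity)
      (mul_pi_div_le_pi (by linarith) (by linarith [hcast hmN]))
      (two_pi_div_lt_mul_pi_div_sub_one (by linarith) (by exact_mod_cast hm2))))
  · rw [show M = tridiagonalToeplitz (N - 2) _ _ from Matrix.ext hM]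
    convert tridiagonalToeplitz_hasEigenvalue _ _ hm1 hmN using 1
    have hsize : ((N - 2 : ℕ) : ℝ) + 1 = N - 1 := by
      rw [Nat.cast_sub (by omega)]; push_cast; ring
    rw [hlam, hsize]
    ring
end

section
/- Let N ≥ 3 be an integer, let α₁, …, α_N be real numbers with sin α_n ≠ 0 for all n and α₁ + ⋯ + α_N = 2π, and let L₁, …, L_N be positive reals (indices mod N). Set θ_n = α₁ + ⋯ + α_{n−1}, u_n = (cos θ_n, sin θ_n) ∈ ℝ², and define the spoke stresses σ_n = csc α_n / L_{n+1} + csc α_{n−1} / L_{n−1} − (cot α_n + cot α_{n−1}) / L_n. Then Σ_{n=1}^{N} σ_n u_n = 0. -/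
/-!
In the sector between spokes `n` and `n + 1`, the combinations `csc α • u_{n+1} - cot α • u_n`
and `csc α • u_n - cot α • u_{n+1}` are the unit normals `u_n^⊥` and `-u_{n+1}^⊥` of the two
bounding spokes (`u^⊥` is `u` rotated by `π / 2`). Splitting `σ_n` into its sector-`n` and sector-`(n-1)` parts therefore makes
`σ_n u_n = P_n - P_{n+1}` for an explicit potential `P`, and the sum telescopes to
`P_1 - P_{N+1}`, which vanishes because `θ_{N+1} = θ_1 + 2π` and `α`, `L` are `N`-periodic.
-/

open Real Finset

noncomputable def unitVec (θ : ℝ) : ℝ × ℝ := (cos θ, sin θ)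

lemma unitVec_add (θ α : ℝ) :
    unitVec (θ + α) = cos α • unitVec θ + sin α • unitVec (θ + π / 2) := by
  simp only [unitVec, cos_add_pi_div_two, sin_add_pi_div_two]
  ext <;> simp only [cos_add, sin_add, Prod.fst_add, Prod.snd_add, Prod.smul_fst, Prod.smul_snd,
    smul_eq_mul] <;> ring

lemma unitVec_add_two_pi (θ : ℝ) : unitVec (θ + 2 * π) = unitVec θ := by
  simp only [unitVec, cos_add_two_pi, sin_add_two_pi]

lemma csc_smul_unitVec_add_sub_cot_smul (θ α : ℝ) (hα : sin α ≠ 0) :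
    (1 / sin α) • unitVec (θ + α) - (cos α / sin α) • unitVec θ = unitVec (θ + π / 2) := by
  rw [unitVec_add]
  match_scalars
  · ring
  · field_simp

lemma csc_smul_unitVec_sub_cot_smul_add (θ α : ℝ) (hα : sin α ≠ 0) :
    (1 / sin α) • unitVec θ - (cos α / sin α) • unitVec (θ + α)
      = -unitVec (θ + α + π / 2) := by
  have h := unitVec_add (θ + α) (-α)
  rw [add_neg_cancel_right, cos_neg, sin_neg] at h
  rw [h]
  match_scalars
  · ring
  · field_simp

noncomputable def spokeStress (α L : ℕ → ℝ) (n : ℕ) : ℝ :=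
  (1 / sin (α n)) / L (n + 1) + (1 / sin (α (n - 1))) / L (n - 1)
    - (cos (α n) / sin (α n) + cos (α (n - 1)) / sin (α (n - 1))) / L n

noncomputable def spokeForcePotential (α L θ : ℕ → ℝ) (n : ℕ) : ℝ × ℝ :=
  (L n)⁻¹ • unitVec (θ n + π / 2)
    + ((1 / sin (α (n - 1))) / L (n - 1) - (cos (α (n - 1)) / sin (α (n - 1))) / L n)
      • unitVec (θ n)

lemma spokeStress_smul_unitVec (α L θ : ℕ → ℝ) (n : ℕ) (hθ : θ (n + 1) = θ n + α n)
    (hα : sin (α n) ≠ 0) :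
    spokeStress α L n • unitVec (θ n)
      = spokeForcePotential α L θ n - spokeForcePotential α L θ (n + 1) := by
  have h₁ := csc_smul_unitVec_add_sub_cot_smul (θ n) (α n) hα
  have h₂ := csc_smul_unitVec_sub_cot_smul_add (θ n) (α n) hα
  simp only [spokeStress, spokeForcePotential, hθ, Nat.add_sub_cancel]
  linear_combination (norm := module) (L n)⁻¹ • h₁ + (L (n + 1))⁻¹ • h₂

theorem hub_force_balance_general (N : ℕ) (hN : 3 ≤ N) (α L : ℕ → ℝ)
    (hαper : ∀ n, α (n + N) = α n) (hLper : ∀ n, L (n + N) = L n)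
    (hα : ∀ n, 1 ≤ n → n ≤ N → Real.sin (α n) ≠ 0)
    (hsum : ∑ n ∈ Icc 1 N, α n = 2 * Real.pi)
    (θ : ℕ → ℝ) (hθ : ∀ n, θ n = ∑ i ∈ Ico 1 n, α i)
    (u : ℕ → ℝ × ℝ) (hu : ∀ n, u n = (Real.cos (θ n), Real.sin (θ n)))
    (σ : ℕ → ℝ)
    (hσ : ∀ n, σ n = (1 / Real.sin (α n)) / L (n + 1)
      + (1 / Real.sin (α (n - 1))) / L (n - 1)
      - (Real.cos (α n) / Real.sin (α n) + Real.cos (α (n - 1)) / Real.sin (α (n - 1))) / L n) :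
    ∑ n ∈ Icc 1 N, σ n • u n = 0 := by
  set P := spokeForcePotential α L θ
  have hθ_succ (n : ℕ) (hn : 1 ≤ n) : θ (n + 1) = θ n + α n := by
    rw [hθ, hθ, sum_Ico_succ_top hn]
  have hθ_one : θ 1 = 0 := by simp [hθ]
  have hθ_last : θ (N + 1) = θ 1 + 2 * π := by
    rw [hθ_one, zero_add, hθ, Ico_add_one_right_eq_Icc, hsum]
  have hP : P (N + 1) = P 1 := by
    have hα₀ : α 0 = α N := by simpa using (hαper 0).symm
    have hL₀ : L 0 = L N := by simpa using (hLper 0).symm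
    have hL_last : L (N + 1) = L 1 := by rw [add_comm, hLper]
    simp only [P, spokeForcePotential, hθ_last, add_right_comm _ (2 * π), unitVec_add_two_pi,
      Nat.add_sub_cancel, Nat.sub_self, hα₀, hL₀, hL_last]
  calc ∑ n ∈ Icc 1 N, σ n • u n = ∑ n ∈ Icc 1 N, -(P (n + 1) - P n) := by
        refine sum_congr rfl fun n hn => ?_
        obtain ⟨hn₁, hnN⟩ := mem_Icc.mp hn
        rw [hσ, hu, neg_sub]
        exact spokeStress_smul_unitVec α L θ n (hθ_succ n hn₁) (hα n hn₁ hnN)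
    _ = 0 := by rw [sum_neg_distrib, sum_Icc_sub (by omega), hP, sub_self, neg_zero]

open Finset in
/-- Force balance at the hub vertex of the wheel self stress of an unfolded origami vertex:
with sector angles `α n` (cyclic mod `N`, summing to `2π`), spoke lengths `L n > 0`,
spoke directions `u n = (cos θ n, sin θ n)` where `θ n = α 1 + ⋯ + α (n-1)`, and spoke
stresses `σ n = csc α_n / L_{n+1} + csc α_{n-1} / L_{n-1} - (cot α_n + cot α_{n-1}) / L_n`,
one has `∑_{n=1}^{N} σ n • u n = 0`. -/
theorem hub_force_balance (N : ℕ) (hN : 3 ≤ N) (α L : ℕ → ℝ)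
    (hαper : ∀ n, α (n + N) = α n) (hLper : ∀ n, L (n + N) = L n)
    (hα : ∀ n, 1 ≤ n → n ≤ N → Real.sin (α n) ≠ 0)
    (hsum : ∑ n ∈ Icc 1 N, α n = 2 * Real.pi)
    (hL : ∀ n, 1 ≤ n → n ≤ N → 0 < L n)
    (θ : ℕ → ℝ) (hθ : ∀ n, θ n = ∑ i ∈ Ico 1 n, α i)
    (u : ℕ → ℝ × ℝ) (hu : ∀ n, u n = (Real.cos (θ n), Real.sin (θ n)))
    (σ : ℕ → ℝ)
    (hσ : ∀ n, σ n = (1 / Real.sin (α n)) / L (n + 1)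
      + (1 / Real.sin (α (n - 1))) / L (n - 1)
      - (Real.cos (α n) / Real.sin (α n) + Real.cos (α (n - 1)) / Real.sin (α (n - 1))) / L n) :
    ∑ n ∈ Icc 1 N, σ n • u n = 0 :=
  hub_force_balance_general N hN α L hαper hLper hα hsum θ hθ u hu σ hσ
end

section
/- Let α₁, α₂, α₃ be real numbers with sin αⱼ ≠ 0 for j = 1,2,3 and α₁ + α₂ + α₃ = 2π, and let L₁, L₂, L₃ be positive reals (indices mod 3). Define σ_n = csc α_n / L_{n+1} + csc α_{n−1} / L_{n−1} − (cot α_n + cot α_{n−1}) / L_n for n = 1,2,3. Then σ₁ / sin α₂ = σ₂ / sin α₃ = σ₃ / sin α₁. -/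
/-!
When `a + b + c = 2π`, `cot a + cot c = sin (a + c) / (sin a sin c) = -sin b / (sin a sin c)`.
Hence every ratio `σ_n / sin α_{n+1}` equals the cyclically symmetric expression
`∑_n 1 / (L_n sin α_{n-1} sin α_n)`.
-/

open Real

theorem cos_div_sin_add_cos_div_sin {a b : ℝ} (ha : sin a ≠ 0) (hb : sin b ≠ 0) :
    cos a / sin a + cos b / sin b = sin (a + b) / (sin a * sin b) := by
  rw [sin_add]
  field_simp
  ring

theorem spoke_stress_div_sin {a b c : ℝ} (ha : sin a ≠ 0) (hb : sin b ≠ 0) (hc : sin c ≠ 0)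
    (hsum : a + b + c = 2 * π) (L₁ L₂ L₃ : ℝ) :
    ((1 / sin a) / L₂ + (1 / sin c) / L₃ - (cos a / sin a + cos c / sin c) / L₁) / sin b
      = 1 / (sin c * sin a * L₁) + 1 / (sin a * sin b * L₂) + 1 / (sin b * sin c * L₃) := by
  have hac : sin (a + c) = -sin b := by
    rw [show a + c = 2 * π - b by linarith, sin_two_pi_sub]
  rw [cos_div_sin_add_cos_div_sin ha hc, hac]
  field_simp
  ring

theorem three_spoke_law_of_sines_general (α₁ α₂ α₃ : ℝ)
    (h₁ : Real.sin α₁ ≠ 0) (h₂ : Real.sin α₂ ≠ 0) (h₃ : Real.sin α₃ ≠ 0)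
    (hsum : α₁ + α₂ + α₃ = 2 * Real.pi)
    (L₁ L₂ L₃ : ℝ)
    (σ₁ σ₂ σ₃ : ℝ)
    (hσ₁ : σ₁ = (1 / Real.sin α₁) / L₂ + (1 / Real.sin α₃) / L₃
      - (Real.cos α₁ / Real.sin α₁ + Real.cos α₃ / Real.sin α₃) / L₁)
    (hσ₂ : σ₂ = (1 / Real.sin α₂) / L₃ + (1 / Real.sin α₁) / L₁
      - (Real.cos α₂ / Real.sin α₂ + Real.cos α₁ / Real.sin α₁) / L₂)
    (hσ₃ : σ₃ = (1 / Real.sin α₃) / L₁ + (1 / Real.sin α₂) / L₂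
      - (Real.cos α₃ / Real.sin α₃ + Real.cos α₂ / Real.sin α₂) / L₃) :
    σ₁ / Real.sin α₂ = σ₂ / Real.sin α₃ ∧ σ₂ / Real.sin α₃ = σ₃ / Real.sin α₁ := by
  rw [hσ₁, hσ₂, hσ₃, spoke_stress_div_sin h₁ h₂ h₃ hsum,
    spoke_stress_div_sin h₂ h₃ h₁ (by linarith), spoke_stress_div_sin h₃ h₁ h₂ (by linarith)]
  constructor <;> ring

/-- Law-of-sines ratios for the closure of the force triangle at the hub of a 3-spoke wheel:
for sector angles `α₁, α₂, α₃` (indices mod 3) with non-vanishing sines summing to `2π` and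
positive spoke lengths `L₁, L₂, L₃`, the spoke stresses
`σ_n = csc α_n / L_{n+1} + csc α_{n-1} / L_{n-1} - (cot α_n + cot α_{n-1}) / L_n`
satisfy `σ₁ / sin α₂ = σ₂ / sin α₃ = σ₃ / sin α₁`. -/
theorem three_spoke_law_of_sines (α₁ α₂ α₃ : ℝ)
    (h₁ : Real.sin α₁ ≠ 0) (h₂ : Real.sin α₂ ≠ 0) (h₃ : Real.sin α₃ ≠ 0)
    (hsum : α₁ + α₂ + α₃ = 2 * Real.pi)
    (L₁ L₂ L₃ : ℝ) (hL₁ : 0 < L₁) (hL₂ : 0 < L₂) (hL₃ : 0 < L₃)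
    (σ₁ σ₂ σ₃ : ℝ)
    (hσ₁ : σ₁ = (1 / Real.sin α₁) / L₂ + (1 / Real.sin α₃) / L₃
      - (Real.cos α₁ / Real.sin α₁ + Real.cos α₃ / Real.sin α₃) / L₁)
    (hσ₂ : σ₂ = (1 / Real.sin α₂) / L₃ + (1 / Real.sin α₁) / L₁
      - (Real.cos α₂ / Real.sin α₂ + Real.cos α₁ / Real.sin α₁) / L₂)
    (hσ₃ : σ₃ = (1 / Real.sin α₃) / L₁ + (1 / Real.sin α₂) / L₂
      - (Real.cos α₃ / Real.sin α₃ + Real.cos α₂ / Real.sin α₂) / L₃) :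
    σ₁ / Real.sin α₂ = σ₂ / Real.sin α₃ ∧ σ₂ / Real.sin α₃ = σ₃ / Real.sin α₁ :=
  three_spoke_law_of_sines_general α₁ α₂ α₃ h₁ h₂ h₃ hsum L₁ L₂ L₃ σ₁ σ₂ σ₃ hσ₁ hσ₂ hσ₃
end

section
/- Let a and b be real numbers with sin a ≠ 0, sin b ≠ 0, and sin(a+b) ≠ 0, and let L₋, L₀, L₊ be positive reals. Define σ = csc b / L₊ + csc a / L₋ − (cot b + cot a)/L₀ and Δσ = csc a / L₀ − csc(a+b)/L₊ − (cot a − cot(a+b))/L₋. Then σ · sin b + Δσ · sin(a+b) = 0. -/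
/-! Multiplying by `sin b` and `sin (a + b)` and using `cot x ± cot y = sin (y ± x) / (sin x sin y)`,
both `σ sin b` and `Δσ sin (a + b)` become `1 / L₊ + (sin b / sin a) / L₋ - (sin (a + b) / sin a) / L₀`
up to sign. -/

namespace Real

theorem cos_div_sin_add_cos_div_sin {x y : ℝ} (hx : sin x ≠ 0) (hy : sin y ≠ 0) :
    cos x / sin x + cos y / sin y = sin (x + y) / (sin x * sin y) := by
  rw [sin_add]
  field_simp
  ring

theorem cos_div_sin_sub_cos_div_sin {x y : ℝ} (hx : sin x ≠ 0) (hy : sin y ≠ 0) :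
    cos x / sin x - cos y / sin y = sin (y - x) / (sin x * sin y) := by
  rw [sin_sub]
  field_simp

end Real

theorem wheel_stress_induction_identity_general (a b : ℝ)
    (ha : Real.sin a ≠ 0) (hb : Real.sin b ≠ 0) (hab : Real.sin (a + b) ≠ 0)
    (Lm L0 Lp : ℝ)
    (σ Δσ : ℝ)
    (hσ : σ = (1 / Real.sin b) / Lp + (1 / Real.sin a) / Lm
      - (Real.cos b / Real.sin b + Real.cos a / Real.sin a) / L0)
    (hΔσ : Δσ = (1 / Real.sin a) / L0 - (1 / Real.sin (a + b)) / Lp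
      - (Real.cos a / Real.sin a - Real.cos (a + b) / Real.sin (a + b)) / Lm) :
    σ * Real.sin b + Δσ * Real.sin (a + b) = 0 := by
  rw [hσ, hΔσ, Real.cos_div_sin_add_cos_div_sin hb ha, Real.cos_div_sin_sub_cos_div_sin ha hab,
    add_sub_cancel_left, add_comm b a]
  field_simp
  ring

/-- Key trigonometric identity in the inductive proof that the wheel stress is a self stress:
for real `a`, `b` with `sin a ≠ 0`, `sin b ≠ 0`, `sin (a+b) ≠ 0` and positive reals
`L₋, L₀, L₊`, setting `σ = csc b / L₊ + csc a / L₋ - (cot b + cot a)/L₀` and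
`Δσ = csc a / L₀ - csc (a+b) / L₊ - (cot a - cot (a+b)) / L₋`, one has
`σ * sin b + Δσ * sin (a+b) = 0`. -/
theorem wheel_stress_induction_identity (a b : ℝ)
    (ha : Real.sin a ≠ 0) (hb : Real.sin b ≠ 0) (hab : Real.sin (a + b) ≠ 0)
    (Lm L0 Lp : ℝ) (hLm : 0 < Lm) (hL0 : 0 < L0) (hLp : 0 < Lp)
    (σ Δσ : ℝ)
    (hσ : σ = (1 / Real.sin b) / Lp + (1 / Real.sin a) / Lm
      - (Real.cos b / Real.sin b + Real.cos a / Real.sin a) / L0)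
    (hΔσ : Δσ = (1 / Real.sin a) / L0 - (1 / Real.sin (a + b)) / Lp
      - (Real.cos a / Real.sin a - Real.cos (a + b) / Real.sin (a + b)) / Lm) :
    σ * Real.sin b + Δσ * Real.sin (a + b) = 0 :=
  wheel_stress_induction_identity_general a b ha hb hab Lm L0 Lp σ Δσ hσ hΔσ
end

section
/- Let α ∈ (0, π) and define, for (x, y) in a neighborhood of (π/2, π/2), β(x, y) = arccos( (cos α − cos x · cos y) / (sin x · sin y) ). Then β(π/2, π/2) = α, and as (s, t) → (0, 0) in ℝ², β(π/2 + s, π/2 + t) = α + (2st − (s² + t²) cos α) / (2 sin α) + o(s² + t²). -/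
/-!
With `x = π/2 + s` and `y = π/2 + t` the argument of `arccos` becomes
`(cos α - sin s sin t) / (cos s cos t)`. The product-to-sum formulas reduce both products to the
one-variable expansion `cos x = 1 - x²/2 + O(x⁴)`, so the argument is
`cos α - s t + cos α (s² + t²)/2 + o(s² + t²)`. Since `arccos` has derivative `-1 / sin α` at
`cos α`, the first-order expansion of `arccos` there gives the claim.
-/

open Real Asymptotics Filter Topology

local notation "Q" => fun p : ℝ × ℝ => Prod.fst p ^ 2 + Prod.snd p ^ 2

theorem Real.cos_sub_one_add_sq_div_two_isLittleO :
    (fun x : ℝ => cos x - (1 - x ^ 2 / 2)) =o[𝓝 0] fun x => x ^ 2 := by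
  refine IsBigO.trans_isLittleO ?_ (isLittleO_pow_pow (by norm_num : 2 < 4))
  refine IsBigO.of_bound (5 / 96) ?_
  filter_upwards [Metric.closedBall_mem_nhds (0 : ℝ) one_pos] with x hx
  simpa [mul_comm] using cos_bound (by simpa using hx)

theorem Real.hasDerivAt_arccos_cos {α : ℝ} (hα : α ∈ Set.Ioo 0 π) :
    HasDerivAt arccos (-(1 / sin α)) (cos α) := by
  have hsin : 0 < sin α := sin_pos_of_pos_of_lt_pi hα.1 hα.2
  have hsq := sin_sq_add_cos_sq α
  have hne₁ : cos α ≠ -1 := fun h => by rw [h] at hsq; nlinarith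
  have hne₂ : cos α ≠ 1 := fun h => by rw [h] at hsq; nlinarith
  simpa [← sin_eq_sqrt_one_sub_cos_sq hα.1.le hα.2.le] using hasDerivAt_arccos hne₁ hne₂

theorem Real.arccos_cos_add_isLittleO {α : ℝ} (hα : α ∈ Set.Ioo 0 π) :
    (fun h => arccos (cos α + h) - α + h / sin α) =o[𝓝 0] fun h => h := by
  refine (hasDerivAt_iff_isLittleO_nhds_zero.1 (hasDerivAt_arccos_cos hα)).congr_left fun h => ?_
  rw [arccos_cos hα.1.le hα.2.le, smul_eq_mul]
  ring

theorem Asymptotics.IsBigO.div_sub_self_isLittleO {ι 𝕜 : Type*} [NormedField 𝕜]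
    {l : Filter ι} {f g D : ι → 𝕜} (hf : f =O[l] g) (hD : Tendsto D l (𝓝 1)) :
    (fun x => f x / D x - f x) =o[l] g := by
  have hD' : Tendsto (fun x => (D x)⁻¹ - 1) l (𝓝 0) := by
    simpa using (hD.inv₀ one_ne_zero).sub_const 1
  exact (hf.mul_isLittleO ((isLittleO_one_iff 𝕜).2 hD')).congr (fun x => by ring)
    (fun x => mul_one _)

theorem isBigO_fst_add_snd_sq (l : Filter (ℝ × ℝ)) :
    (fun p : ℝ × ℝ => (p.1 + p.2) ^ 2) =O[l] Q :=
  IsBigO.of_bound 2 <| .of_forall fun p => by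
    simp only [norm_pow, Real.norm_eq_abs, sq_abs]
    rw [abs_of_nonneg (by positivity)]
    nlinarith [sq_nonneg (p.1 - p.2)]

theorem isBigO_fst_sub_snd_sq (l : Filter (ℝ × ℝ)) :
    (fun p : ℝ × ℝ => (p.1 - p.2) ^ 2) =O[l] Q :=
  IsBigO.of_bound 2 <| .of_forall fun p => by
    simp only [norm_pow, Real.norm_eq_abs, sq_abs]
    rw [abs_of_nonneg (by positivity)]
    nlinarith [sq_nonneg (p.1 + p.2)]

theorem isBigO_fst_mul_snd (l : Filter (ℝ × ℝ)) :
    (fun p : ℝ × ℝ => p.1 * p.2) =O[l] Q :=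
  IsBigO.of_bound 1 <| .of_forall fun p => by
    simp only [Real.norm_eq_abs, one_mul]
    rw [abs_of_nonneg (by positivity : (0 : ℝ) ≤ p.1 ^ 2 + p.2 ^ 2), abs_le]
    constructor <;> nlinarith [sq_nonneg (p.1 - p.2), sq_nonneg (p.1 + p.2)]

theorem cos_fst_add_snd_sub_isLittleO :
    (fun p : ℝ × ℝ => cos (p.1 + p.2) - (1 - (p.1 + p.2) ^ 2 / 2)) =o[𝓝 0] Q :=
  (cos_sub_one_add_sq_div_two_isLittleO.comp_tendsto
    ((by fun_prop : Continuous fun p : ℝ × ℝ => p.1 + p.2).tendsto' 0 0 (by simp))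
    ).trans_isBigO (isBigO_fst_add_snd_sq _)

theorem cos_fst_sub_snd_sub_isLittleO :
    (fun p : ℝ × ℝ => cos (p.1 - p.2) - (1 - (p.1 - p.2) ^ 2 / 2)) =o[𝓝 0] Q :=
  (cos_sub_one_add_sq_div_two_isLittleO.comp_tendsto
    ((by fun_prop : Continuous fun p : ℝ × ℝ => p.1 - p.2).tendsto' 0 0 (by simp))
    ).trans_isBigO (isBigO_fst_sub_snd_sq _)

theorem cos_fst_mul_cos_snd_sub_isLittleO :
    (fun p : ℝ × ℝ => cos p.1 * cos p.2 - (1 - (p.1 ^ 2 + p.2 ^ 2) / 2)) =o[𝓝 0] Q :=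
  ((cos_fst_add_snd_sub_isLittleO.add cos_fst_sub_snd_sub_isLittleO).const_mul_left
    (1 / 2)).congr_left fun p => by rw [cos_add, cos_sub]; ring

theorem sin_fst_mul_sin_snd_sub_isLittleO :
    (fun p : ℝ × ℝ => sin p.1 * sin p.2 - p.1 * p.2) =o[𝓝 0] Q :=
  ((cos_fst_sub_snd_sub_isLittleO.sub cos_fst_add_snd_sub_isLittleO).const_mul_left
    (1 / 2)).congr_left fun p => by rw [cos_add, cos_sub]; ring

theorem cos_sub_sin_mul_sin_div_cos_mul_cos_isLittleO (c : ℝ) :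
    (fun p : ℝ × ℝ => (c - sin p.1 * sin p.2) / (cos p.1 * cos p.2)
      - (c - p.1 * p.2 + c * (p.1 ^ 2 + p.2 ^ 2) / 2)) =o[𝓝 0] Q := by
  set D : ℝ × ℝ → ℝ := fun p => cos p.1 * cos p.2
  set N : ℝ × ℝ → ℝ := fun p => c - sin p.1 * sin p.2 - c * D p
  have hD : Tendsto D (𝓝 0) (𝓝 1) := by
    simpa [D] using (by fun_prop : Continuous D).tendsto (0 : ℝ × ℝ)
  have hN : (fun p => N p - (c * (p.1 ^ 2 + p.2 ^ 2) / 2 - p.1 * p.2)) =o[𝓝 0] Q :=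
    ((cos_fst_mul_cos_snd_sub_isLittleO.const_mul_left (-c)).sub
      sin_fst_mul_sin_snd_sub_isLittleO).congr_left fun p => by simp only [N, D]; ring
  have hNO : N =O[𝓝 0] Q :=
    ((hN.isBigO.add (isBigO_refl Q _ |>.const_mul_left (c / 2))).sub
      (isBigO_fst_mul_snd _)).congr_left fun p => by ring
  refine ((hNO.div_sub_self_isLittleO hD).add hN).congr' ?_ .rfl
  filter_upwards [hD.eventually_ne one_ne_zero] with p hp
  obtain ⟨hcos₁, hcos₂⟩ := mul_ne_zero_iff.1 hp
  simp only [N, D]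
  field_simp
  ring

open Real Asymptotics in
/-- Quadratic expansion of the apex angle of a spherical triangle near the flat state:
for `α ∈ (0, π)` and `β (x, y) = arccos ((cos α - cos x cos y) / (sin x sin y))`, one has
`β (π/2, π/2) = α`, and as `(s, t) → (0, 0)`,
`β (π/2 + s, π/2 + t) = α + (2 s t - (s² + t²) cos α) / (2 sin α) + o(s² + t²)`. -/
theorem spherical_angle_quadratic_expansion (α : ℝ) (hα : α ∈ Set.Ioo 0 Real.pi) :
    Real.arccos ((Real.cos α - Real.cos (Real.pi / 2) * Real.cos (Real.pi / 2))
        / (Real.sin (Real.pi / 2) * Real.sin (Real.pi / 2))) = α ∧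
    (fun p : ℝ × ℝ =>
        Real.arccos ((Real.cos α
            - Real.cos (Real.pi / 2 + p.1) * Real.cos (Real.pi / 2 + p.2))
          / (Real.sin (Real.pi / 2 + p.1) * Real.sin (Real.pi / 2 + p.2)))
        - α - (2 * p.1 * p.2 - (p.1 ^ 2 + p.2 ^ 2) * Real.cos α) / (2 * Real.sin α))
      =o[nhds (0 : ℝ × ℝ)] (fun p : ℝ × ℝ => p.1 ^ 2 + p.2 ^ 2) := by
  refine ⟨by simp [arccos_cos hα.1.le hα.2.le], ?_⟩
  have hsin : sin α ≠ 0 := (sin_pos_of_pos_of_lt_pi hα.1 hα.2).ne'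
  have hu := cos_sub_sin_mul_sin_div_cos_mul_cos_isLittleO (cos α)
  set h : ℝ × ℝ → ℝ := fun p => (cos α - sin p.1 * sin p.2) / (cos p.1 * cos p.2) - cos α
  have hh : h =O[𝓝 0] Q :=
    ((hu.isBigO.sub (isBigO_fst_mul_snd _)).add
      (isBigO_refl Q _ |>.const_mul_left (cos α / 2))).congr_left fun p => by simp only [h]; ring
  have hQ : Tendsto Q (𝓝 0) (𝓝 0) := (by fun_prop : Continuous Q).tendsto' 0 0 (by simp)
  have harccos :=
    ((arccos_cos_add_isLittleO hα).comp_tendsto (hh.trans_tendsto hQ)).trans_isBigO hh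
  refine (harccos.sub (hu.const_mul_left (1 / sin α))).congr_left fun p => ?_
  simp only [Function.comp, h, add_comm (π / 2), cos_add_pi_div_two, sin_add_pi_div_two,
    neg_mul_neg, add_sub_cancel]
  field_simp
  ring
end
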